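/- arXiv:2508.06740 — 2 statements merged into one kernel-verified Lean document; each statement's English description precedes it below -/
import Mathlib

section
/- Let k be a commutative ring. The k-linear span of the elements B_I for all I ⊆ [n−1] is a k-subalgebra of k[S_n]; that is, it contains the identity and is closed under multiplication (Solomon's descent algebra theorem). -/
open scoped Classical

noncomputable section

namespace CardShuffle

/-- The descent set of a permutation of `Fin n`, recorded with 1-based positions:
`i ∈ Des w` iff `1 ≤ i ≤ n-1` and (in 1-based terms) `w(i) > w(i+1)`. -/
def Des {n : ℕ} (w : Equiv.Perm (Fin n)) : Finset ℕ :=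
  (Finset.Ico 1 n).filter fun i =>
    ∃ h : i < n, w ⟨i, h⟩ < w ⟨i - 1, Nat.lt_of_le_of_lt (Nat.sub_le i 1) h⟩

/-- The element `B_I` of the group algebra. -/
def BElt (k : Type*) [CommRing k] (n : ℕ) (I : Finset ℕ) :
    MonoidAlgebra k (Equiv.Perm (Fin n)) :=
  ∑ w ∈ Finset.univ.filter fun w : Equiv.Perm (Fin n) => Des w ⊆ I,
    MonoidAlgebra.of k (Equiv.Perm (Fin n)) w

/-- The element `D_I` of the group algebra. -/
def DElt (k : Type*) [CommRing k] (n : ℕ) (I : Finset ℕ) :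
    MonoidAlgebra k (Equiv.Perm (Fin n)) :=
  ∑ w ∈ Finset.univ.filter fun w : Equiv.Perm (Fin n) => Des w = I,
    MonoidAlgebra.of k (Equiv.Perm (Fin n)) w

/-- The longest element `w₀` (i.e. `i ↦ n+1-i` in 1-based terms) as an element of the
group algebra. -/
def w0elt (k : Type*) [CommRing k] (n : ℕ) : MonoidAlgebra k (Equiv.Perm (Fin n)) :=
  MonoidAlgebra.of k (Equiv.Perm (Fin n)) Fin.revPerm

/-- `gapsInv α = gaps⁻¹(α)`: the set of partial sums `α₁+⋯+α_i` for `1 ≤ i ≤ ℓ(α)-1`,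
a subset of `[n-1] = {1,…,n-1}`. -/
def gapsInv {n : ℕ} (α : Composition n) : Finset ℕ :=
  (Finset.Ico 1 α.length).image α.sizeUpTo

/-- The element `B_α := B_{gaps⁻¹(α)}` for a composition `α` of `n`. -/
def BComp (k : Type*) [CommRing k] {n : ℕ} (α : Composition n) :
    MonoidAlgebra k (Equiv.Perm (Fin n)) :=
  BElt k n (gapsInv α)

/-- The reverse of a composition. -/
def revComp {n : ℕ} (α : Composition n) : Composition n where
  blocks := α.blocks.reverse
  blocks_pos := by intro i h; exact α.blocks_pos (List.mem_reverse.mp h)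
  blocks_sum := by rw [List.sum_reverse]; exact α.blocks_sum

/-- A set composition (face) of `[n]`: an ordered tuple of pairwise disjoint nonempty
subsets of `[n]` whose union is `[n]`. -/
structure SetComp (n : ℕ) where
  blocks : List (Finset (Fin n))
  nonempty : ∀ B ∈ blocks, B.Nonempty
  pairwiseDisjoint : blocks.Pairwise Disjoint
  cover : ∀ x : Fin n, ∃ B ∈ blocks, x ∈ B

namespace SetComp

variable {n : ℕ}

/-- The length (number of blocks) of a set composition. -/
abbrev len (F : SetComp n) : ℕ := F.blocks.length

/-- Containment of faces: `F.le G` (i.e. `F ⊑ G`) iff every block of `F` is a subset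
of some block of `G`. -/
def le (F G : SetComp n) : Prop := ∀ B ∈ F.blocks, ∃ C ∈ G.blocks, B ⊆ C

/-- The type of a set composition, as the list of sizes of its blocks. -/
def typeList (F : SetComp n) : List ℕ := F.blocks.map Finset.card

/-- The product of two set compositions: the list of all nonempty intersections
`F_i ∩ G_j`, in lexicographically increasing order of `(i,j)`. -/
def mul (F G : SetComp n) : SetComp n where
  blocks := ((F.blocks.map fun B => G.blocks.map fun C => B ∩ C).flatten).filter
      fun S => S.Nonempty
  nonempty := by
    intro B hB
    simpa using (List.mem_filter.mp hB).2
  pairwiseDisjoint := by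
    apply List.Pairwise.filter
    rw [List.pairwise_flatten]
    constructor
    · intro l hl
      rw [List.mem_map] at hl
      obtain ⟨B, hB, rfl⟩ := hl
      rw [List.pairwise_map]
      exact G.pairwiseDisjoint.imp fun h =>
        h.mono Finset.inter_subset_right Finset.inter_subset_right
    · rw [List.pairwise_map]
      refine F.pairwiseDisjoint.imp ?_
      intro B B' h x hx y hy
      rw [List.mem_map] at hx hy
      obtain ⟨C, _, rfl⟩ := hx
      obtain ⟨C', _, rfl⟩ := hy
      exact h.mono Finset.inter_subset_left Finset.inter_subset_left
  cover := by
    intro x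
    obtain ⟨B, hB, hxB⟩ := F.cover x
    obtain ⟨C, hC, hxC⟩ := G.cover x
    refine ⟨B ∩ C, ?_, Finset.mem_inter.mpr ⟨hxB, hxC⟩⟩
    rw [List.mem_filter]
    constructor
    · rw [List.mem_flatten]
      exact ⟨_, List.mem_map_of_mem hB, List.mem_map_of_mem hC⟩
    · exact decide_eq_true ⟨x, Finset.mem_inter.mpr ⟨hxB, hxC⟩⟩

/-- The one-block set composition `([n])` (for `n = 0`, the empty set composition). -/
def one (n : ℕ) : SetComp n where
  blocks := if (Finset.univ : Finset (Fin n)).Nonempty then [Finset.univ] else []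
  nonempty := by
    intro B hB
    split at hB
    · rw [List.mem_singleton] at hB; subst hB; assumption
    · simp at hB
  pairwiseDisjoint := by split <;> simp
  cover := by
    intro x
    have h : (Finset.univ : Finset (Fin n)).Nonempty := ⟨x, Finset.mem_univ x⟩
    refine ⟨Finset.univ, ?_, Finset.mem_univ x⟩
    rw [if_pos h]
    exact List.mem_singleton.mpr rfl

end SetComp

/-- The knapsack number `n_α(F)`: the number of faces `G` with `F ⊑ G` and `type G = α`. -/
def knap {n : ℕ} (α : Composition n) (F : SetComp n) : ℕ :=
  Nat.card {G : SetComp n // F.le G ∧ G.typeList = α.blocks}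

/-- The signed knapsack number `ñ_α(F) = (-1)^(n - ℓ(F)) n_α(F)`. -/
def sknap {n : ℕ} (α : Composition n) (F : SetComp n) : ℤ :=
  (-1) ^ (n - F.len) * (knap α F : ℤ)

/-- The number of singleton (size-1) blocks of a set composition. -/
def sinF {n : ℕ} (F : SetComp n) : ℕ :=
  (F.blocks.filter fun B => B.card = 1).length

/-!
The coefficient of `w` in `B_I * B_J` is the number of factorizations `w = u * v` with
`Des u ⊆ I` and `Des v ⊆ J`. Such a factorization is determined by `f = blockIndex I ∘ v`:
`Des u ⊆ I` says exactly that `v⁻¹` sorts the positions lexicographically by `(f, w)`.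
Sorting by `(f, w')` instead gives a factorization of `w'`, and if `Des w = Des w'` the descents
of the new `v` are those of the old one, because they depend only on `f` and on which consecutive
values of `w` decrease. So the coefficients of `B_I * B_J` are constant on descent classes,
i.e. it is a combination of the `D_K`, which lie in the span of the `B_I` by Möbius inversion
of `B_I = ∑_{K ⊆ I} D_K`.
-/

end CardShuffle

open Finset

variable {n : ℕ}

theorem Fin.strictMono_of_lt_of_val_eq_add_one {α : Type*} [Preorder α] {f : Fin n → α}
    (h : ∀ a b : Fin n, (b : ℕ) = a + 1 → f a < f b) : StrictMono f := by
  rcases n with _ | m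
  · exact fun a => a.elim0
  · exact Fin.strictMono_iff_lt_succ.2 fun i => h _ _ (by simp)

namespace Tuple

theorem sort_eq_of_strictMono_comp {α : Type*} [LinearOrder α] {K : Fin n → α}
    {σ : Equiv.Perm (Fin n)} (h : StrictMono (K ∘ σ)) : sort K = σ :=
  (eq_sort_iff.2 ⟨h.monotone, fun _ _ hij he => absurd he (h hij).ne⟩).symm

theorem strictMono_comp_sort {α : Type*} [LinearOrder α] {K : Fin n → α}
    (hK : Function.Injective K) : StrictMono (K ∘ sort K) :=
  (monotone_sort K).strictMono_of_injective (hK.comp (sort K).injective)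

theorem inv_sort_lt_inv_sort_iff {α : Type*} [LinearOrder α] {K : Fin n → α}
    (hK : Function.Injective K) {a b : Fin n} :
    (sort K)⁻¹ a < (sort K)⁻¹ b ↔ K a < K b := by
  simpa using
    ((strictMono_comp_sort hK).lt_iff_lt (a := (sort K)⁻¹ a) (b := (sort K)⁻¹ b)).symm

end Tuple

namespace CardShuffle

theorem mem_Des_iff {w : Equiv.Perm (Fin n)} {a b : Fin n} (hab : (b : ℕ) = a + 1) :
    (b : ℕ) ∈ Des w ↔ w b < w a := by
  obtain ⟨a, ha⟩ := a
  obtain ⟨b, hb⟩ := b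
  simp only at hab
  subst hab
  simp [Des, hb]

theorem exists_val_eq_succ_of_mem_Des {w : Equiv.Perm (Fin n)} {i : ℕ} (hi : i ∈ Des w) :
    ∃ a b : Fin n, (b : ℕ) = a + 1 ∧ i = b := by
  obtain ⟨h1, h2⟩ := mem_Ico.1 (mem_filter.1 hi).1
  exact ⟨⟨i - 1, by omega⟩, ⟨i, h2⟩, by simp; omega, rfl⟩

theorem Des_subset_iff {u : Equiv.Perm (Fin n)} {I : Finset ℕ} :
    Des u ⊆ I ↔ ∀ a b : Fin n, (b : ℕ) = a + 1 → (b : ℕ) ∉ I → u a < u b := by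
  refine ⟨fun h a b hab hbI => ?_, fun h i hi => ?_⟩
  · refine (le_of_not_gt fun hlt => hbI (h ((mem_Des_iff hab).2 hlt))).lt_of_ne ?_
    exact u.injective.ne (Fin.ne_of_lt (by rw [Fin.lt_def]; omega))
  · obtain ⟨a, b, hab, rfl⟩ := exists_val_eq_succ_of_mem_Des hi
    by_contra hbI
    exact lt_asymm ((mem_Des_iff hab).1 hi) (h a b hab hbI)

theorem Des_eq_empty_iff {u : Equiv.Perm (Fin n)} : Des u = ∅ ↔ u = 1 := by
  rw [← subset_empty, Des_subset_iff, ← Equiv.Perm.monotone_iff]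
  refine ⟨fun h => (Fin.strictMono_of_lt_of_val_eq_add_one fun a b hab => h a b hab
    (notMem_empty _)).monotone, fun h a b hab _ => ?_⟩
  exact h.strictMono_of_injective u.injective (by rw [Fin.lt_def]; omega)

theorem Des_eq_Des_iff {v v' : Equiv.Perm (Fin n)} :
    Des v = Des v' ↔ ∀ a b : Fin n, (b : ℕ) = a + 1 → (v b < v a ↔ v' b < v' a) := by
  refine ⟨fun h a b hab => by rw [← mem_Des_iff hab, ← mem_Des_iff hab, h], fun h => ?_⟩
  ext i
  constructor <;> intro hi <;> obtain ⟨a, b, hab, rfl⟩ := exists_val_eq_succ_of_mem_Des hi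
  · exact (mem_Des_iff hab).2 ((h a b hab).1 ((mem_Des_iff hab).1 hi))
  · exact (mem_Des_iff hab).2 ((h a b hab).2 ((mem_Des_iff hab).1 hi))

/-- Positions are 0-based and descents 1-based as in `Des`: positions `i` and `i + 1` lie in the
same block of `I` iff `i + 1 ∉ I`. -/
def blockIndex (I : Finset ℕ) (i : Fin n) : ℕ := #{j ∈ I | j ≤ (i : ℕ)}

theorem blockIndex_mono (I : Finset ℕ) : Monotone (blockIndex I : Fin n → ℕ) :=
  fun _ _ hab => card_le_card fun j hj => by
    rw [mem_filter] at hj ⊢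
    exact ⟨hj.1, hj.2.trans (Fin.le_def.1 hab)⟩

theorem blockIndex_of_val_eq_succ (I : Finset ℕ) {a b : Fin n} (hab : (b : ℕ) = a + 1) :
    blockIndex I b = blockIndex I a + if (b : ℕ) ∈ I then 1 else 0 := by
  have hsplit :
      {j ∈ I | j ≤ (b : ℕ)} = {j ∈ I | j ≤ (a : ℕ)} ∪ {j ∈ I | j = (b : ℕ)} := by
    ext j
    by_cases hj : j ∈ I <;> simp only [mem_union, mem_filter, hj, true_and, false_and, or_self]
    omega
  rw [blockIndex, hsplit, card_union_of_disjoint, filter_eq']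
  · split_ifs <;> rfl
  · exact disjoint_filter.2 fun j _ hja hjb => by omega

theorem Des_subset_iff_strictMono {u : Equiv.Perm (Fin n)} {I : Finset ℕ} :
    Des u ⊆ I ↔ StrictMono fun i => toLex (blockIndex I i, u i) := by
  rw [Des_subset_iff]
  refine ⟨fun h => Fin.strictMono_of_lt_of_val_eq_add_one fun a b hab => ?_,
    fun h a b hab hbI => ?_⟩
  · rw [Prod.Lex.toLex_lt_toLex, blockIndex_of_val_eq_succ I hab]
    by_cases hb : (b : ℕ) ∈ I <;> simp [hb, h a b hab]
  · have := h (show a < b by rw [Fin.lt_def]; omega)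
    rw [Prod.Lex.toLex_lt_toLex, blockIndex_of_val_eq_succ I hab] at this
    simpa only [hbI, if_false, add_zero, lt_irrefl, false_or, not_false_eq_true, true_and]
      using this

def lexKey (f : Fin n → ℕ) (w : Equiv.Perm (Fin n)) (i : Fin n) : ℕ ×ₗ Fin n :=
  toLex (f i, w i)

theorem lexKey_injective (f : Fin n → ℕ) (w : Equiv.Perm (Fin n)) :
    Function.Injective (lexKey f w) :=
  fun _ _ h => w.injective (congrArg (fun x => (ofLex x).2) h)

theorem Des_inv_sort_lexKey_eq (f : Fin n → ℕ) {w w' : Equiv.Perm (Fin n)}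
    (hD : Des w = Des w') :
    Des (Tuple.sort (lexKey f w))⁻¹ = Des (Tuple.sort (lexKey f w'))⁻¹ := by
  rw [Des_eq_Des_iff] at hD ⊢
  intro a b hab
  simp only [Tuple.inv_sort_lt_inv_sort_iff (lexKey_injective _ _), lexKey,
    Prod.Lex.toLex_lt_toLex, hD a b hab]

def factorization (w : Equiv.Perm (Fin n)) (f : Fin n → ℕ) :
    Equiv.Perm (Fin n) × Equiv.Perm (Fin n) :=
  (w * Tuple.sort (lexKey f w), (Tuple.sort (lexKey f w))⁻¹)

theorem factorization_blockIndex_comp {I : Finset ℕ} {u : Equiv.Perm (Fin n)}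
    (hu : Des u ⊆ I) (v : Equiv.Perm (Fin n)) :
    factorization (u * v) (blockIndex I ∘ v) = (u, v) := by
  have hsort : Tuple.sort (lexKey (blockIndex I ∘ v) (u * v)) = v⁻¹ := by
    apply Tuple.sort_eq_of_strictMono_comp
    have hkey : lexKey (blockIndex I ∘ v) (u * v) ∘ ⇑v⁻¹ =
        fun i => toLex (blockIndex I i, u i) := by
      funext i
      simp [lexKey]
    rw [hkey]
    exact Des_subset_iff_strictMono.1 hu
  simp [factorization, hsort]

theorem comp_sort_lexKey_eq {I : Finset ℕ} {f : Fin n → ℕ} {τ : Equiv.Perm (Fin n)}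
    (hf : f ∘ τ = blockIndex I) (w : Equiv.Perm (Fin n)) :
    f ∘ Tuple.sort (lexKey f w) = blockIndex I := by
  have hsorted : Monotone (f ∘ Tuple.sort (lexKey f w)) := fun i j hij =>
    Prod.Lex.monotone_fst (lexKey f w _) (lexKey f w _) (Tuple.monotone_sort (lexKey f w) hij)
  rw [← hf]
  exact Tuple.unique_monotone hsorted (hf ▸ blockIndex_mono I)

theorem Des_factorization_fst_subset {I : Finset ℕ} {f : Fin n → ℕ} {τ : Equiv.Perm (Fin n)}
    (hf : f ∘ τ = blockIndex I) (w : Equiv.Perm (Fin n)) :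
    Des (factorization w f).1 ⊆ I := by
  have hkey : (fun i => toLex (blockIndex I i, (factorization w f).1 i)) =
      lexKey f w ∘ Tuple.sort (lexKey f w) := by
    funext i
    simp [factorization, lexKey, ← congrFun (comp_sort_lexKey_eq hf w) i]
  rw [Des_subset_iff_strictMono, hkey]
  exact Tuple.strictMono_comp_sort (lexKey_injective f w)

theorem blockIndex_comp_factorization_snd {I : Finset ℕ} {f : Fin n → ℕ}
    {τ : Equiv.Perm (Fin n)} (hf : f ∘ τ = blockIndex I) (w : Equiv.Perm (Fin n)) :
    blockIndex I ∘ (factorization w f).2 = f := by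
  funext i
  have := congrFun (comp_sort_lexKey_eq hf w) ((Tuple.sort (lexKey f w))⁻¹ i)
  simpa [factorization] using this.symm

def factorPairs (I J : Finset ℕ) (w : Equiv.Perm (Fin n)) :
    Finset (Equiv.Perm (Fin n) × Equiv.Perm (Fin n)) :=
  ((univ.filter fun u => Des u ⊆ I) ×ˢ (univ.filter fun v => Des v ⊆ J)).filter
    fun p => p.1 * p.2 = w

theorem mem_factorPairs {I J : Finset ℕ} {w u v : Equiv.Perm (Fin n)} :
    (u, v) ∈ factorPairs I J w ↔ Des u ⊆ I ∧ Des v ⊆ J ∧ u * v = w := by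
  simp [factorPairs, and_assoc]

theorem factorization_mem_factorPairs {I J : Finset ℕ} {w w' : Equiv.Perm (Fin n)}
    (hD : Des w = Des w') {p : Equiv.Perm (Fin n) × Equiv.Perm (Fin n)}
    (hp : p ∈ factorPairs I J w) :
    factorization w' (blockIndex I ∘ p.2) ∈ factorPairs I J w' := by
  obtain ⟨u, v⟩ := p
  obtain ⟨hu, hv, rfl⟩ := mem_factorPairs.1 hp
  have hf : (blockIndex I ∘ v) ∘ ⇑v⁻¹ = blockIndex I := by
    funext i
    simp
  have hsnd : Des (factorization w' (blockIndex I ∘ v)).2 = Des v := by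
    rw [← congrArg (fun p => Des p.2) (factorization_blockIndex_comp hu v)]
    exact (Des_inv_sort_lexKey_eq _ hD).symm
  exact mem_factorPairs.2 ⟨Des_factorization_fst_subset hf w', hsnd ▸ hv,
    mul_inv_cancel_right _ _⟩

theorem factorization_factorization {I J : Finset ℕ} {w w' : Equiv.Perm (Fin n)}
    {p : Equiv.Perm (Fin n) × Equiv.Perm (Fin n)} (hp : p ∈ factorPairs I J w) :
    factorization w (blockIndex I ∘ (factorization w' (blockIndex I ∘ p.2)).2) = p := by
  obtain ⟨u, v⟩ := p
  obtain ⟨hu, -, rfl⟩ := mem_factorPairs.1 hp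
  have hf : (blockIndex I ∘ v) ∘ ⇑v⁻¹ = blockIndex I := by
    funext i
    simp
  rw [blockIndex_comp_factorization_snd hf, factorization_blockIndex_comp hu]

theorem card_factorPairs_eq {I J : Finset ℕ} {w w' : Equiv.Perm (Fin n)}
    (hD : Des w = Des w') : #(factorPairs I J w) = #(factorPairs I J w') :=
  card_bij' (fun p _ => factorization w' (blockIndex I ∘ p.2))
    (fun p _ => factorization w (blockIndex I ∘ p.2))
    (fun _ hp => factorization_mem_factorPairs hD hp)
    (fun _ hp => factorization_mem_factorPairs hD.symm hp)
    (fun _ hp => factorization_factorization hp) (fun _ hp => factorization_factorization hp)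

def descentSpan (k : Type*) [CommRing k] (n : ℕ) :
    Submodule k (MonoidAlgebra k (Equiv.Perm (Fin n))) :=
  Submodule.span k {x | ∃ I : Finset ℕ, I ⊆ Ico 1 n ∧ x = BElt k n I}

theorem BElt_empty (k : Type*) [CommRing k] (n : ℕ) : BElt k n ∅ = 1 := by
  have h : (univ.filter fun w : Equiv.Perm (Fin n) => Des w ⊆ ∅) = {1} := by
    ext w
    simp [Des_eq_empty_iff]
  rw [BElt, h, sum_singleton, map_one]

section

variable {k : Type*} [CommRing k]

theorem BElt_eq_sum_DElt (I : Finset ℕ) : BElt k n I = ∑ K ∈ I.powerset, DElt k n K := by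
  rw [BElt, ← sum_fiberwise_of_maps_to (g := Des) (t := I.powerset)
    fun w hw => mem_powerset.2 (mem_filter.1 hw).2]
  refine sum_congr rfl fun K hK => sum_congr ?_ fun _ _ => rfl
  ext w
  simp only [mem_filter, mem_univ, true_and, and_iff_right_iff_imp]
  exact fun h => h ▸ mem_powerset.1 hK

theorem DElt_mem_descentSpan {K : Finset ℕ} (hK : K ⊆ Ico 1 n) :
    DElt k n K ∈ descentSpan k n := by
  induction K using Finset.strongInduction with
  | _ K ih =>
    have hD : DElt k n K = BElt k n K - ∑ L ∈ K.powerset.erase K, DElt k n L := by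
      rw [BElt_eq_sum_DElt, ← add_sum_erase _ _ (mem_powerset_self K), add_sub_cancel_right]
    rw [hD]
    refine sub_mem (Submodule.subset_span ⟨K, hK, rfl⟩) (sum_mem fun L hL => ?_)
    have hLK : L ⊂ K := Finset.ssubset_iff_subset_ne.2
      ⟨mem_powerset.1 (mem_of_mem_erase hL), ne_of_mem_erase hL⟩
    exact ih L hLK (hLK.subset.trans hK)

theorem sum_smul_mem_descentSpan (c : Equiv.Perm (Fin n) → k)
    (hc : ∀ w w', Des w = Des w' → c w = c w') :
    ∑ w, c w • MonoidAlgebra.of k _ w ∈ descentSpan k n := by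
  rw [← sum_fiberwise_of_maps_to (g := Des) (t := (Ico 1 n).powerset)
    fun w _ => mem_powerset.2 (filter_subset _ _)]
  refine sum_mem fun K hK => ?_
  rcases (univ.filter fun w : Equiv.Perm (Fin n) => Des w = K).eq_empty_or_nonempty
    with hempty | ⟨w₀, hw₀⟩
  · rw [hempty, sum_empty]
    exact zero_mem _
  · have hconst : ∑ w ∈ univ.filter (fun w => Des w = K), c w • MonoidAlgebra.of k _ w =
        c w₀ • DElt k n K := by
      rw [DElt, smul_sum]
      refine sum_congr rfl fun w hw => ?_
      rw [hc w w₀ ((mem_filter.1 hw).2.trans (mem_filter.1 hw₀).2.symm)]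
    rw [hconst]
    exact Submodule.smul_mem _ _ (DElt_mem_descentSpan (mem_powerset.1 hK))

theorem BElt_mul_BElt (I J : Finset ℕ) :
    BElt k n I * BElt k n J = ∑ w, (#(factorPairs I J w) : k) • MonoidAlgebra.of k _ w := by
  simp only [BElt, sum_mul_sum, ← map_mul]
  rw [← sum_product', ← sum_fiberwise
    (g := fun p : Equiv.Perm (Fin n) × Equiv.Perm (Fin n) => p.1 * p.2)]
  refine sum_congr rfl fun w _ => ?_
  rw [← factorPairs, Nat.cast_smul_eq_nsmul, ← sum_const]
  exact sum_congr rfl fun p hp => by rw [(mem_filter.1 hp).2]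

theorem BElt_mul_BElt_mem_descentSpan (I J : Finset ℕ) :
    BElt k n I * BElt k n J ∈ descentSpan k n := by
  rw [BElt_mul_BElt]
  exact sum_smul_mem_descentSpan _ fun _ _ hD => congrArg Nat.cast (card_factorPairs_eq hD)

theorem mul_mem_descentSpan {a b : MonoidAlgebra k (Equiv.Perm (Fin n))}
    (ha : a ∈ descentSpan k n) (hb : b ∈ descentSpan k n) : a * b ∈ descentSpan k n := by
  have hab := Submodule.mul_mem_mul ha hb
  rw [descentSpan, Submodule.span_mul_span] at hab
  refine Submodule.span_le.2 (Set.mul_subset_iff.2 ?_) hab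
  rintro _ ⟨I, -, rfl⟩ _ ⟨J, -, rfl⟩
  exact BElt_mul_BElt_mem_descentSpan I J

end

/-- **Solomon.** Let `k` be a commutative ring.  The `k`-linear span of
the elements `B_I` for `I ⊆ [n-1]` contains the identity of `k[S_n]` and is closed
under multiplication; i.e. it is a `k`-subalgebra of `k[S_n]`. -/
theorem descent_algebra_is_subalgebra (k : Type*) [CommRing k] (n : ℕ) :
    (1 : MonoidAlgebra k (Equiv.Perm (Fin n))) ∈
      Submodule.span k {x : MonoidAlgebra k (Equiv.Perm (Fin n)) |
        ∃ I : Finset ℕ, I ⊆ Finset.Ico 1 n ∧ x = BElt k n I} ∧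
    ∀ a ∈ Submodule.span k {x : MonoidAlgebra k (Equiv.Perm (Fin n)) |
        ∃ I : Finset ℕ, I ⊆ Finset.Ico 1 n ∧ x = BElt k n I},
      ∀ b ∈ Submodule.span k {x : MonoidAlgebra k (Equiv.Perm (Fin n)) |
        ∃ I : Finset ℕ, I ⊆ Finset.Ico 1 n ∧ x = BElt k n I},
        a * b ∈ Submodule.span k {x : MonoidAlgebra k (Equiv.Perm (Fin n)) |
          ∃ I : Finset ℕ, I ⊆ Finset.Ico 1 n ∧ x = BElt k n I} :=
  ⟨Submodule.subset_span ⟨∅, empty_subset _, (BElt_empty k n).symm⟩,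
    fun _ ha _ hb => mul_mem_descentSpan ha hb⟩

end CardShuffle
end
end

section
/- Let n > 1. Then the set of signed knapsack numbers for the composition (1, n−1) is ñ_{(1,n−1)}(CF) = {−n+2} ∪ {j ∈ ℤ : −n+4 ≤ j ≤ n−3} ∪ {0} ∪ {n}. -/
/-!
For `n > 1` the faces of type `(1, n - 1)` are the faces `({x}, [n] ∖ {x})`, and
`F ⊑ ({x}, [n] ∖ {x})` exactly when `{x}` is a block of `F`. Hence `n_{(1,n-1)}(F)` is the
number `s` of singleton blocks of `F`, and `ñ_{(1,n-1)}(F) = (-1)^(n-k) s` with `k = ℓ(F)`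
depends only on the type of `F`; every composition of `n` is a type. A composition of `n` with
`k` parts, `s` of them equal to `1`, satisfies `s ≤ k`, `2k ≤ n + s`, and `s = k` only if
`k = n`; conversely `s` ones followed by one or two larger parts realise every admissible pair,
and reading off the signs gives the four pieces.
-/

open scoped Classical

noncomputable section

namespace CardShuffle

theorem _root_.List.two_mul_length_le_sum_add_count_one :
    ∀ {l : List ℕ}, (∀ b ∈ l, 0 < b) → 2 * l.length ≤ l.sum + l.count 1
  | [], _ => le_rfl
  | b :: l, hpos => by
    have ih := List.two_mul_length_le_sum_add_count_one fun c hc => hpos c (.tail b hc)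
    have hb := hpos b List.mem_cons_self
    rw [List.length_cons, List.sum_cons, List.count_cons]
    split <;> simp_all <;> omega

theorem _root_.List.sum_eq_length_of_count_one_eq {l : List ℕ} (h : l.count 1 = l.length) :
    l.sum = l.length := by
  have hl : l = List.replicate l.length 1 :=
    List.eq_replicate_iff.mpr ⟨rfl, fun b hb => (List.count_eq_length.mp h b hb).symm⟩
  rw [hl, List.sum_replicate, smul_eq_mul, mul_one, List.length_replicate]

namespace SetComp

variable {n : ℕ}

@[ext]
theorem ext {F G : SetComp n} (h : F.blocks = G.blocks) : F = G := by
  cases F; cases G; simpa using h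

theorem nodup (F : SetComp n) : F.blocks.Nodup :=
  F.pairwiseDisjoint.imp_of_mem fun hB _ hd => by
    rintro rfl
    exact (F.nonempty _ hB).ne_empty (Finset.disjoint_self_iff_empty _ |>.mp hd)

theorem disjoint_of_ne (F : SetComp n) {B C : Finset (Fin n)} (hB : B ∈ F.blocks)
    (hC : C ∈ F.blocks) (hne : B ≠ C) : Disjoint B C :=
  have : Std.Symm (α := Finset (Fin n)) Disjoint := ⟨fun _ _ h => h.symm⟩
  F.pairwiseDisjoint.forall hB hC hne

theorem sum_typeList (F : SetComp n) : F.typeList.sum = n := by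
  have hcover : F.blocks.toFinset.biUnion id = Finset.univ :=
    Finset.eq_univ_of_forall fun x => by
      obtain ⟨B, hB, hx⟩ := F.cover x
      exact Finset.mem_biUnion.mpr ⟨B, List.mem_toFinset.mpr hB, hx⟩
  calc F.typeList.sum = ∑ B ∈ F.blocks.toFinset, B.card := (List.sum_toFinset _ F.nodup).symm
    _ = (F.blocks.toFinset.biUnion id).card :=
      (Finset.card_biUnion fun B hB C hC hne =>
        F.disjoint_of_ne (List.mem_toFinset.mp hB) (List.mem_toFinset.mp hC) hne).symm
    _ = n := by rw [hcover, Finset.card_univ, Fintype.card_fin]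

def type (F : SetComp n) : Composition n where
  blocks := F.typeList
  blocks_pos := by
    simp only [typeList, List.mem_map]
    rintro _ ⟨B, hB, rfl⟩
    exact (F.nonempty B hB).card_pos
  blocks_sum := F.sum_typeList

theorem length_type (F : SetComp n) : F.type.length = F.len :=
  List.length_map _

def ofComposition (c : Composition n) : SetComp n where
  blocks := List.ofFn fun i => Finset.univ.image (c.embedding i)
  nonempty := by
    simp only [List.mem_ofFn]
    rintro _ ⟨i, rfl⟩
    exact Finset.univ_nonempty_iff.mpr ⟨⟨0, c.one_le_blocksFun i⟩⟩ |>.image _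
  pairwiseDisjoint := by
    rw [List.pairwise_ofFn]
    intro i j hij
    rw [← Finset.disjoint_coe]
    simp only [Finset.coe_image, Finset.coe_univ, Set.image_univ]
    exact c.disjoint_range hij.ne
  cover x := ⟨_, List.mem_ofFn.mpr ⟨c.index x, rfl⟩, by
    simpa using c.mem_range_embedding x⟩

theorem type_ofComposition (c : Composition n) : (ofComposition c).type = c := by
  ext1
  simp only [type, typeList, ofComposition, List.map_ofFn]
  conv_rhs => rw [← c.ofFn_blocksFun]
  congr 1
  funext i
  simp [Finset.card_image_of_injective _ (c.embedding i).injective]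

theorem type_surjective : Function.Surjective (type : SetComp n → Composition n) :=
  fun c => ⟨ofComposition c, type_ofComposition c⟩

section singletonCompl

def singletonCompl (hn : 1 < n) (x : Fin n) : SetComp n where
  blocks := [{x}, {x}ᶜ]
  nonempty := by
    simp only [List.mem_cons, List.not_mem_nil, or_false]
    rintro _ (rfl | rfl)
    · exact Finset.singleton_nonempty x
    · rw [← Finset.card_pos, Finset.card_compl, Finset.card_singleton, Fintype.card_fin]
      omega
  pairwiseDisjoint := List.pairwise_pair.mpr disjoint_compl_right
  cover y := by
    by_cases h : y = x
    · exact ⟨{x}, by simp, by simp [h]⟩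
    · exact ⟨{x}ᶜ, by simp, by simp [h]⟩

variable (hn : 1 < n)

theorem typeList_singletonCompl (x : Fin n) :
    (singletonCompl hn x).typeList = [1, n - 1] := by
  simp [singletonCompl, typeList, Finset.card_compl]

theorem singletonCompl_injective : Function.Injective (singletonCompl hn) := fun _ _ h =>
  Finset.singleton_injective (List.head_eq_of_cons_eq (congrArg blocks h))

theorem le_singletonCompl_iff {F : SetComp n} {x : Fin n} :
    F.le (singletonCompl hn x) ↔ {x} ∈ F.blocks := by
  constructor
  · intro hle
    obtain ⟨B, hB, hxB⟩ := F.cover x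
    obtain ⟨C, hC, hBC⟩ := hle B hB
    simp only [singletonCompl, List.mem_cons, List.not_mem_nil, or_false] at hC
    rcases hC with rfl | rfl
    · rwa [(F.nonempty B hB).subset_singleton_iff.mp hBC] at hB
    · exact absurd (hBC hxB) (by simp)
  · intro hx B hB
    by_cases h : B = {x}
    · exact ⟨{x}, by simp [singletonCompl], h.le⟩
    · exact ⟨{x}ᶜ, by simp [singletonCompl],
        Finset.subset_compl_iff_disjoint_right.mpr (F.disjoint_of_ne hB hx h)⟩

theorem exists_singletonCompl_eq {G : SetComp n} (hG : G.typeList = [1, n - 1]) :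
    ∃ x, singletonCompl hn x = G := by
  obtain ⟨B, C, hBC, hB, hC⟩ : ∃ B C, G.blocks = [B, C] ∧ B.card = 1 ∧ C.card = n - 1 := by
    simp only [typeList, List.map_eq_cons_iff, List.map_eq_nil_iff] at hG
    obtain ⟨B, _, hbl, hB, C, _, rfl, hC, rfl⟩ := hG
    exact ⟨B, C, hbl, hB, hC⟩
  obtain ⟨x, rfl⟩ := Finset.card_eq_one.mp hB
  have hdisj : Disjoint {x} C := List.pairwise_pair.mp (hBC ▸ G.pairwiseDisjoint)
  have hCx : C = {x}ᶜ := Finset.eq_of_subset_of_card_le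
    (Finset.subset_compl_iff_disjoint_left.mpr hdisj) (by simp [hC, Finset.card_compl])
  exact ⟨x, ext (by rw [hBC, hCx]; rfl)⟩

end singletonCompl

end SetComp

theorem card_singleton_mem_eq_sinF {n : ℕ} (F : SetComp n) :
    Nat.card {x : Fin n // {x} ∈ F.blocks} = sinF F := by
  have himage : (F.blocks.filter fun B => B.card = 1).toFinset
      = (Finset.univ.filter fun x => {x} ∈ F.blocks).image (fun x => ({x} : Finset (Fin n))) := by
    ext B
    simp only [List.mem_toFinset, List.mem_filter, Finset.mem_image, Finset.mem_filter,
      Finset.mem_univ, true_and, decide_eq_true_eq, Finset.card_eq_one]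
    constructor
    · rintro ⟨hB, x, rfl⟩
      exact ⟨x, hB, rfl⟩
    · rintro ⟨x, hx, rfl⟩
      exact ⟨hx, x, rfl⟩
  rw [sinF, ← List.toFinset_card_of_nodup (F.nodup.filter _), himage,
    Finset.card_image_of_injective _ Finset.singleton_injective, Nat.card_eq_fintype_card,
    Fintype.card_subtype]

theorem knap_eq_sinF {n : ℕ} (hn : 1 < n) {α : Composition n} (hα : α.blocks = [1, n - 1])
    (F : SetComp n) : knap α F = sinF F := by
  let f : {x : Fin n // {x} ∈ F.blocks} → {G : SetComp n // F.le G ∧ G.typeList = α.blocks} :=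
    fun x => ⟨SetComp.singletonCompl hn x, SetComp.le_singletonCompl_iff hn |>.mpr x.2,
      hα ▸ SetComp.typeList_singletonCompl hn x⟩
  have hf : Function.Bijective f := by
    refine ⟨fun x y h => Subtype.ext (SetComp.singletonCompl_injective hn congr(($h).val)),
      fun ⟨G, hle, hG⟩ => ?_⟩
    obtain ⟨x, rfl⟩ := SetComp.exists_singletonCompl_eq hn (hα ▸ hG)
    exact ⟨⟨x, SetComp.le_singletonCompl_iff hn |>.mp hle⟩, rfl⟩
  rw [knap, ← Nat.card_congr (Equiv.ofBijective f hf), card_singleton_mem_eq_sinF]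

theorem sinF_eq_count_one {n : ℕ} (F : SetComp n) : sinF F = F.type.blocks.count 1 := by
  rw [sinF, List.count_eq_length_filter]
  simp only [SetComp.type, SetComp.typeList, List.filter_map, List.length_map]
  congr 2

def signedCountOnes {n : ℕ} (c : Composition n) : ℤ :=
  (-1) ^ (n - c.length) * c.blocks.count 1

theorem sknap_eq_signedCountOnes_type {n : ℕ} (hn : 1 < n) {α : Composition n}
    (hα : α.blocks = [1, n - 1]) (F : SetComp n) :
    sknap α F = signedCountOnes F.type := by
  rw [sknap, knap_eq_sinF hn hα, sinF_eq_count_one, signedCountOnes, SetComp.length_type]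

theorem signedCountOnes_mem {n : ℕ} (c : Composition n) :
    signedCountOnes c ∈
      ({-(n : ℤ) + 2, 0, (n : ℤ)} : Set ℤ) ∪ Set.Icc (-(n : ℤ) + 4) ((n : ℤ) - 3) := by
  have hcount : c.blocks.count 1 ≤ c.length := List.count_le_length.trans_eq c.blocks_length
  have hlength : c.length ≤ n := c.length_le
  have htwo : 2 * c.length ≤ n + c.blocks.count 1 := by
    simpa [c.blocks_length, c.blocks_sum] using
      List.two_mul_length_le_sum_add_count_one fun _ => c.blocks_pos
  have hones : c.blocks.count 1 = c.length → c.length = n := fun h => by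
    simpa [c.blocks_length, c.blocks_sum] using
      (List.sum_eq_length_of_count_one_eq (h.trans c.blocks_length.symm)).symm
  simp only [signedCountOnes, Set.mem_union, Set.mem_insert_iff, Set.mem_singleton_iff,
    Set.mem_Icc]
  rcases Nat.even_or_odd (n - c.length) with hpar | hpar
  · rw [hpar.neg_one_pow]
    rw [Nat.even_iff] at hpar
    omega
  · rw [hpar.neg_one_pow]
    rw [Nat.odd_iff] at hpar
    omega

theorem neg_one_pow_mul_mem_range_signedCountOnes {n : ℕ} (s e : ℕ) (L : List ℕ)
    (hL : ∀ m ∈ L, 2 ≤ m) (hsum : s + L.sum = n) (he : (n - (s + L.length)) % 2 = e % 2) :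
    (-1) ^ e * (s : ℤ) ∈ Set.range (signedCountOnes (n := n)) := by
  refine ⟨⟨List.replicate s 1 ++ L, ?_, by simp [hsum]⟩, ?_⟩
  · simp only [List.mem_append, List.mem_replicate]
    rintro _ (⟨-, rfl⟩ | hm)
    exacts [one_pos, by have := hL _ hm; omega]
  · have hL1 : L.count 1 = 0 := List.count_eq_zero_of_not_mem fun h => by
      have := hL 1 h; omega
    simp only [signedCountOnes, Composition.length, List.length_append, List.length_replicate,
      List.count_append, List.count_replicate, hL1]
    rw [neg_one_pow_eq_pow_mod_two, he, ← neg_one_pow_eq_pow_mod_two]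
    simp

theorem range_signedCountOnes {n : ℕ} (hn : 1 < n) :
    Set.range (signedCountOnes (n := n)) =
      ({-(n : ℤ) + 2, 0, (n : ℤ)} : Set ℤ) ∪ Set.Icc (-(n : ℤ) + 4) ((n : ℤ) - 3) := by
  refine (Set.range_subset_iff.mpr signedCountOnes_mem).antisymm ?_
  -- `s` ones followed by `[n - s]` or by `[2, n - s - 2]`: the two lengths differ by one,
  -- so either sign of `s` is reached
  have hsigned : ∀ s e : ℕ, s + 3 ≤ n → (s + 4 ≤ n ∨ e % 2 = 0) →
      (-1) ^ e * (s : ℤ) ∈ Set.range (signedCountOnes (n := n)) := by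
    intro s e h3 h4
    by_cases hpar : (n - s - 1) % 2 = e % 2
    · exact neg_one_pow_mul_mem_range_signedCountOnes s e [n - s] (by simp; omega)
        (by simp; omega) (by simp; omega)
    · exact neg_one_pow_mul_mem_range_signedCountOnes s e [2, n - s - 2] (by simp; omega)
        (by simp; omega) (by simp; omega)
  rintro z ((rfl | rfl | rfl) | ⟨hlo, hhi⟩)
  · convert neg_one_pow_mul_mem_range_signedCountOnes (n := n) (n - 2) 1 [2] (by simp)
      (by simp; omega) (by simp; omega) using 1
    push_cast
    omega
  · simpa using neg_one_pow_mul_mem_range_signedCountOnes (n := n) 0 (n - 1) [n]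
      (by simp; omega) (by simp) (by simp)
  · simpa using neg_one_pow_mul_mem_range_signedCountOnes n 0 [] (by simp) (by simp) (by simp)
  · obtain ⟨s, rfl | rfl⟩ := Int.eq_nat_or_neg z
    · simpa using hsigned s 0 (by omega) (by omega)
    · simpa using hsigned s 1 (by omega) (by omega)

/-- Let `n > 1`.  The set of signed knapsack numbers for the
composition `(1, n-1)` is `{-n+2} ∪ [-n+4, n-3] ∪ {0} ∪ {n} ⊆ ℤ`. -/
theorem signed_knapsack_set_one_nsub1 (n : ℕ) (hn : 1 < n) (α : Composition n)
    (hα : α.blocks = [1, n - 1]) :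
    {z : ℤ | ∃ F : SetComp n, sknap α F = z} =
      ({-(n : ℤ) + 2, 0, (n : ℤ)} : Set ℤ) ∪ Set.Icc (-(n : ℤ) + 4) ((n : ℤ) - 3) := by
  have hsknap : sknap α = signedCountOnes ∘ SetComp.type :=
    funext (sknap_eq_signedCountOnes_type hn hα)
  change Set.range (sknap α) = _
  rw [hsknap, SetComp.type_surjective.range_comp, range_signedCountOnes hn]

end CardShuffle
end
end
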